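/- arXiv:2010.02521 — 2 statements merged into one kernel-verified Lean document; each statement's English description precedes it below -/
import Mathlib

section
/- Suppose the covariate-shift setting: (Y,X) | S=s has density p_s(x) q(y|x), so the conditional law of Y given X is the same under S=0 and S=1. If ω(x) equals the true density ratio p0(x)/p1(x), then the population augmented estimating function E_1[ω(X) A (Y − m(X))] + E_0[A (m(X) − g(Aᵀβ))] equals E_0[A (Y − g(Aᵀβ))] for every measurable function m, and hence β0 (defined by E_0[A(Y − g(Aᵀβ0))] = 0) solves the augmented equation. -/
/-!
Under covariate shift the target law is the `ω(X)`-tilt of the source law, so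
`E_1[ω(X) A (Y − m(X))] = E_0[A (Y − m(X))]` for any `m`; adding `E_0[A (m(X) − g(Aᵀβ))]`
the imputation `m` telescopes away, leaving the target estimating function.
-/

open MeasureTheory

theorem integral_withDensity_ofReal_eq_integral_smul {α E : Type*} [MeasurableSpace α]
    [NormedAddCommGroup E] [NormedSpace ℝ E] {μ : Measure α} {w : α → ℝ}
    (hw : AEMeasurable w μ) (hw_nonneg : ∀ᵐ x ∂μ, 0 ≤ w x) (f : α → E) :
    ∫ x, f x ∂μ.withDensity (fun x => ENNReal.ofReal (w x)) = ∫ x, w x • f x ∂μ := by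
  rw [integral_withDensity_eq_integral_toReal_smul₀ hw.ennreal_ofReal
    (ae_of_all _ fun _ => ENNReal.ofReal_lt_top)]
  refine integral_congr_ae ?_
  filter_upwards [hw_nonneg] with x hx
  rw [ENNReal.toReal_ofReal hx]

theorem stmt_1_general {𝒳 : Type*} [MeasurableSpace 𝒳] {d : ℕ}
    (ν1 ν0 : Measure (𝒳 × ℝ))
    (ω : 𝒳 → ℝ) (hωmeas : Measurable ω) (hωnonneg : ∀ x, 0 ≤ ω x)
    (hratio : ν0 = ν1.withDensity (fun q => ENNReal.ofReal (ω q.1)))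
    (A : 𝒳 → Fin d → ℝ) (g : ℝ → ℝ) (m : 𝒳 → ℝ)
    (hint0 : ∀ β : Fin d → ℝ,
      Integrable (fun q : 𝒳 × ℝ => (m q.1 - g (∑ i, A q.1 i * β i)) • A q.1) ν0)
    (hint0' : ∀ β : Fin d → ℝ,
      Integrable (fun q : 𝒳 × ℝ => (q.2 - g (∑ i, A q.1 i * β i)) • A q.1) ν0)
    (β0 : Fin d → ℝ) :
    (∀ β : Fin d → ℝ,
      ((∫ q : 𝒳 × ℝ, (ω q.1 * (q.2 - m q.1)) • A q.1 ∂ν1)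
        + ∫ q : 𝒳 × ℝ, (m q.1 - g (∑ i, A q.1 i * β i)) • A q.1 ∂ν0)
      = ∫ q : 𝒳 × ℝ, (q.2 - g (∑ i, A q.1 i * β i)) • A q.1 ∂ν0)
    ∧ ((∫ q : 𝒳 × ℝ, (q.2 - g (∑ i, A q.1 i * β0 i)) • A q.1 ∂ν0) = 0 →
      ((∫ q : 𝒳 × ℝ, (ω q.1 * (q.2 - m q.1)) • A q.1 ∂ν1)
        + ∫ q : 𝒳 × ℝ, (m q.1 - g (∑ i, A q.1 i * β0 i)) • A q.1 ∂ν0) = 0) := by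
  have hweighted :
      ∫ q, (ω q.1 * (q.2 - m q.1)) • A q.1 ∂ν1 = ∫ q, (q.2 - m q.1) • A q.1 ∂ν0 := by
    rw [hratio, integral_withDensity_ofReal_eq_integral_smul (w := fun q : 𝒳 × ℝ => ω q.1)
      (hωmeas.comp measurable_fst).aemeasurable (ae_of_all _ fun q => hωnonneg q.1)]
    simp_rw [smul_smul]
  have haugmented : ∀ β : Fin d → ℝ,
      ((∫ q : 𝒳 × ℝ, (ω q.1 * (q.2 - m q.1)) • A q.1 ∂ν1)
        + ∫ q : 𝒳 × ℝ, (m q.1 - g (∑ i, A q.1 i * β i)) • A q.1 ∂ν0)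
      = ∫ q : 𝒳 × ℝ, (q.2 - g (∑ i, A q.1 i * β i)) • A q.1 ∂ν0 := by
    intro β
    have hresidual : Integrable (fun q : 𝒳 × ℝ => (q.2 - m q.1) • A q.1) ν0 :=
      ((hint0' β).sub (hint0 β)).congr
        (ae_of_all _ fun q => by rw [Pi.sub_apply, ← sub_smul, sub_sub_sub_cancel_right])
    rw [hweighted, ← integral_add hresidual (hint0 β)]
    simp_rw [← add_smul, sub_add_sub_cancel]
  exact ⟨haugmented, fun h0 => (haugmented β0).trans h0⟩

/-- In the covariate-shift setting, the joint law `ν0` of `(X, Y)` in the target population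
is the `ω(X)`-tilt of the source joint law `ν1` (this encodes both that the conditional law
of `Y` given `X` is shared and that `ω` is the true density ratio `p0/p1`).  Then for every
imputation function `m` and every `β`, the population augmented estimating function
`E_1[ω(X) A (Y − m(X))] + E_0[A (m(X) − g(Aᵀβ))]` equals `E_0[A (Y − g(Aᵀβ))]`; hence any
`β0` solving `E_0[A (Y − g(Aᵀβ0))] = 0` also solves the augmented equation. -/
theorem stmt_1 {𝒳 : Type*} [MeasurableSpace 𝒳] {d : ℕ}
    (ν1 ν0 : Measure (𝒳 × ℝ)) [IsProbabilityMeasure ν1] [IsProbabilityMeasure ν0]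
    (ω : 𝒳 → ℝ) (hωmeas : Measurable ω) (hωnonneg : ∀ x, 0 ≤ ω x)
    (hratio : ν0 = ν1.withDensity (fun q => ENNReal.ofReal (ω q.1)))
    (A : 𝒳 → Fin d → ℝ) (g : ℝ → ℝ) (m : 𝒳 → ℝ)
    (hint1 : ∀ β : Fin d → ℝ,
      Integrable (fun q : 𝒳 × ℝ => (ω q.1 * (q.2 - m q.1)) • A q.1) ν1)
    (hint0 : ∀ β : Fin d → ℝ,
      Integrable (fun q : 𝒳 × ℝ => (m q.1 - g (∑ i, A q.1 i * β i)) • A q.1) ν0)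
    (hint0' : ∀ β : Fin d → ℝ,
      Integrable (fun q : 𝒳 × ℝ => (q.2 - g (∑ i, A q.1 i * β i)) • A q.1) ν0)
    (β0 : Fin d → ℝ) :
    (∀ β : Fin d → ℝ,
      ((∫ q : 𝒳 × ℝ, (ω q.1 * (q.2 - m q.1)) • A q.1 ∂ν1)
        + ∫ q : 𝒳 × ℝ, (m q.1 - g (∑ i, A q.1 i * β i)) • A q.1 ∂ν0)
      = ∫ q : 𝒳 × ℝ, (q.2 - g (∑ i, A q.1 i * β i)) • A q.1 ∂ν0)
    ∧ ((∫ q : 𝒳 × ℝ, (q.2 - g (∑ i, A q.1 i * β0 i)) • A q.1 ∂ν0) = 0 →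
      ((∫ q : 𝒳 × ℝ, (ω q.1 * (q.2 - m q.1)) • A q.1 ∂ν1)
        + ∫ q : 𝒳 × ℝ, (m q.1 - g (∑ i, A q.1 i * β0 i)) • A q.1 ∂ν0) = 0) :=
  stmt_1_general ν1 ν0 ω hωmeas hωnonneg hratio A g m hint0 hint0' β0
end

section
/- In the covariate-shift setting where the conditional law of Y given X is shared across populations, if the imputation model is correct, i.e. m(X) = μ(X) := E(Y|X), then for any nonnegative integrable weight function ω, the population augmented estimating function E_1[ω(X) A (Y − m(X))] + E_0[A (m(X) − g(Aᵀβ))] equals E_0[A (Y − g(Aᵀβ))]; hence β0 solves the augmented equation even when ω is mis-specified. -/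
/-! The augmentation term is built so that everything except `E_0[A (Y − g(Aᵀβ))]` is an
integral of the residual `Y − m(X)` against a function of `X`: the `ν1`-term against `ω A`, and
the difference between `E_0[A (m(X) − g(Aᵀβ))]` and `E_0[A (Y − g(Aᵀβ))]` against `A`. When
`m = E(Y | X)` under both laws each such integral vanishes coordinatewise, whatever `ω` is. -/

open MeasureTheory

section

variable {𝒳 : Type*} [MeasurableSpace 𝒳]

/-- `m` is a version of `E(Y | X)` under the joint law `μ` of `(X, Y)`, in the form of the
orthogonality of the residual `Y − m(X)` to every integrable measurable function of `X`. -/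
def ResidualOrthogonal (μ : Measure (𝒳 × ℝ)) (m : 𝒳 → ℝ) : Prop :=
  ∀ W : 𝒳 → ℝ, Measurable W →
    Integrable (fun q : 𝒳 × ℝ => W q.1 * (q.2 - m q.1)) μ →
    ∫ q : 𝒳 × ℝ, W q.1 * (q.2 - m q.1) ∂μ = 0

namespace ResidualOrthogonal

variable {μ : Measure (𝒳 × ℝ)} {m : 𝒳 → ℝ} {ι : Type*} [Fintype ι]

theorem integral_smul_eq_zero (h : ResidualOrthogonal μ m) {V : 𝒳 → ι → ℝ}
    (hV : Measurable V) (hint : Integrable (fun q : 𝒳 × ℝ => (q.2 - m q.1) • V q.1) μ) :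
    ∫ q : 𝒳 × ℝ, (q.2 - m q.1) • V q.1 ∂μ = 0 := by
  funext i
  have hint_i : Integrable (fun q : 𝒳 × ℝ => V q.1 i * (q.2 - m q.1)) μ := by
    simpa [mul_comm] using hint.eval i
  rw [eval_integral hint.eval i]
  simpa [mul_comm] using h _ ((measurable_pi_apply i).comp hV) hint_i

theorem integral_sub_smul_eq (h : ResidualOrthogonal μ m) {A : 𝒳 → ι → ℝ}
    (hA : Measurable A) (c : 𝒳 → ℝ)
    (hm : Integrable (fun q : 𝒳 × ℝ => (m q.1 - c q.1) • A q.1) μ)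
    (hy : Integrable (fun q : 𝒳 × ℝ => (q.2 - c q.1) • A q.1) μ) :
    ∫ q : 𝒳 × ℝ, (m q.1 - c q.1) • A q.1 ∂μ = ∫ q : 𝒳 × ℝ, (q.2 - c q.1) • A q.1 ∂μ := by
  have hsplit : (fun q : 𝒳 × ℝ => (q.2 - c q.1) • A q.1) =
      fun q => (m q.1 - c q.1) • A q.1 + (q.2 - m q.1) • A q.1 := by
    funext q
    rw [← add_smul, sub_add_sub_cancel']
  have hres : Integrable (fun q : 𝒳 × ℝ => (q.2 - m q.1) • A q.1) μ := by
    refine (hy.sub hm).congr (ae_of_all _ fun q => ?_)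
    rw [Pi.sub_apply, ← sub_smul, sub_sub_sub_cancel_right]
  rw [hsplit, integral_add hm hres, h.integral_smul_eq_zero hA hres, add_zero]

end ResidualOrthogonal

end

theorem stmt_2_general {𝒳 : Type*} [MeasurableSpace 𝒳] {d : ℕ}
    (ν1 ν0 : Measure (𝒳 × ℝ))
    (m : 𝒳 → ℝ)
    (hm1 : ∀ W : 𝒳 → ℝ, Measurable W →
      Integrable (fun q : 𝒳 × ℝ => W q.1 * (q.2 - m q.1)) ν1 →
      ∫ q : 𝒳 × ℝ, W q.1 * (q.2 - m q.1) ∂ν1 = 0)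
    (hm0 : ∀ W : 𝒳 → ℝ, Measurable W →
      Integrable (fun q : 𝒳 × ℝ => W q.1 * (q.2 - m q.1)) ν0 →
      ∫ q : 𝒳 × ℝ, W q.1 * (q.2 - m q.1) ∂ν0 = 0)
    (ω : 𝒳 → ℝ) (hωmeas : Measurable ω)
    (A : 𝒳 → Fin d → ℝ) (hAmeas : Measurable A) (g : ℝ → ℝ)
    (hint1 : Integrable (fun q : 𝒳 × ℝ => (ω q.1 * (q.2 - m q.1)) • A q.1) ν1)
    (hint0 : ∀ β : Fin d → ℝ,
      Integrable (fun q : 𝒳 × ℝ => (m q.1 - g (∑ i, A q.1 i * β i)) • A q.1) ν0)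
    (hint0' : ∀ β : Fin d → ℝ,
      Integrable (fun q : 𝒳 × ℝ => (q.2 - g (∑ i, A q.1 i * β i)) • A q.1) ν0)
    (β0 : Fin d → ℝ) :
    (∀ β : Fin d → ℝ,
      ((∫ q : 𝒳 × ℝ, (ω q.1 * (q.2 - m q.1)) • A q.1 ∂ν1)
        + ∫ q : 𝒳 × ℝ, (m q.1 - g (∑ i, A q.1 i * β i)) • A q.1 ∂ν0)
      = ∫ q : 𝒳 × ℝ, (q.2 - g (∑ i, A q.1 i * β i)) • A q.1 ∂ν0)
    ∧ ((∫ q : 𝒳 × ℝ, (q.2 - g (∑ i, A q.1 i * β0 i)) • A q.1 ∂ν0) = 0 →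
      ((∫ q : 𝒳 × ℝ, (ω q.1 * (q.2 - m q.1)) • A q.1 ∂ν1)
        + ∫ q : 𝒳 × ℝ, (m q.1 - g (∑ i, A q.1 i * β0 i)) • A q.1 ∂ν0) = 0) := by
  have hweighted : ∫ q : 𝒳 × ℝ, (ω q.1 * (q.2 - m q.1)) • A q.1 ∂ν1 = 0 := by
    simpa [smul_smul, mul_comm] using
      ResidualOrthogonal.integral_smul_eq_zero hm1 (hωmeas.smul hAmeas)
        (V := fun x => ω x • A x) (by simpa [smul_smul, mul_comm] using hint1)
  have haugmented (β : Fin d → ℝ) :=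
    ResidualOrthogonal.integral_sub_smul_eq hm0 hAmeas (fun x => g (∑ i, A x i * β i))
      (hint0 β) (hint0' β)
  exact ⟨fun β => by rw [hweighted, zero_add, haugmented],
    fun h => by rw [hweighted, zero_add, haugmented, h]⟩

/-- If the imputation model is correct, `m(X) = E(Y | X)` under both the source (`ν1`) and
target (`ν0`) joint laws of `(X, Y)` (expressed via the defining property of conditional
expectation: weighted residuals of `Y − m(X)` against any function of `X` have mean zero),
then for any nonnegative weight function `ω` the population augmented estimating function
equals `E_0[A (Y − g(Aᵀβ))]`; hence `β0` solving `E_0[A (Y − g(Aᵀβ0))] = 0` solves the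
augmented equation even when `ω` is mis-specified. -/
theorem stmt_2 {𝒳 : Type*} [MeasurableSpace 𝒳] {d : ℕ}
    (ν1 ν0 : Measure (𝒳 × ℝ)) [IsProbabilityMeasure ν1] [IsProbabilityMeasure ν0]
    (m : 𝒳 → ℝ)
    (hm1 : ∀ W : 𝒳 → ℝ, Measurable W →
      Integrable (fun q : 𝒳 × ℝ => W q.1 * (q.2 - m q.1)) ν1 →
      ∫ q : 𝒳 × ℝ, W q.1 * (q.2 - m q.1) ∂ν1 = 0)
    (hm0 : ∀ W : 𝒳 → ℝ, Measurable W →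
      Integrable (fun q : 𝒳 × ℝ => W q.1 * (q.2 - m q.1)) ν0 →
      ∫ q : 𝒳 × ℝ, W q.1 * (q.2 - m q.1) ∂ν0 = 0)
    (ω : 𝒳 → ℝ) (hωmeas : Measurable ω) (hωnonneg : ∀ x, 0 ≤ ω x)
    (A : 𝒳 → Fin d → ℝ) (hAmeas : Measurable A) (g : ℝ → ℝ)
    (hint1 : Integrable (fun q : 𝒳 × ℝ => (ω q.1 * (q.2 - m q.1)) • A q.1) ν1)
    (hint0 : ∀ β : Fin d → ℝ,
      Integrable (fun q : 𝒳 × ℝ => (m q.1 - g (∑ i, A q.1 i * β i)) • A q.1) ν0)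
    (hint0' : ∀ β : Fin d → ℝ,
      Integrable (fun q : 𝒳 × ℝ => (q.2 - g (∑ i, A q.1 i * β i)) • A q.1) ν0)
    (β0 : Fin d → ℝ) :
    (∀ β : Fin d → ℝ,
      ((∫ q : 𝒳 × ℝ, (ω q.1 * (q.2 - m q.1)) • A q.1 ∂ν1)
        + ∫ q : 𝒳 × ℝ, (m q.1 - g (∑ i, A q.1 i * β i)) • A q.1 ∂ν0)
      = ∫ q : 𝒳 × ℝ, (q.2 - g (∑ i, A q.1 i * β i)) • A q.1 ∂ν0)
    ∧ ((∫ q : 𝒳 × ℝ, (q.2 - g (∑ i, A q.1 i * β0 i)) • A q.1 ∂ν0) = 0 →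
      ((∫ q : 𝒳 × ℝ, (ω q.1 * (q.2 - m q.1)) • A q.1 ∂ν1)
        + ∫ q : 𝒳 × ℝ, (m q.1 - g (∑ i, A q.1 i * β0 i)) • A q.1 ∂ν0) = 0) :=
  stmt_2_general ν1 ν0 m hm1 hm0 ω hωmeas A hAmeas g hint1 hint0 hint0' β0
end
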